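/- Suppose the cardinal 2^ω has cofinality greater than ω₁. Let X admit a closed continuous surjection π : X → ω₁, and suppose { α < ω₁ : |π⁻¹({α})| < 2^ω } is stationary. Then X contains a direction. In particular, if |π⁻¹({α})| is finite for stationarily many α, then X contains a direction. -/

import Mathlib

open Set Topology

noncomputable section

universe u

/-- The ordinal ω₁. -/
def omega1 : Ordinal.{0} := (Cardinal.aleph 1).ord

theorem omega1_pos : (0 : Ordinal.{0}) < omega1 := by
  have := Cardinal.ord_lt_ord.mpr (Cardinal.aleph_pos 1)
  simpa [omega1, Cardinal.ord_zero] using this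

theorem omega1_isLimit : Order.IsSuccLimit omega1 :=
  Cardinal.isSuccLimit_ord (Cardinal.aleph0_le_aleph 1)

/-- ω₁ as a type (the set of countable ordinals). -/
def W : Type 1 := {a : Ordinal.{0} // a < omega1}

instance : LinearOrder W := by unfold W; infer_instance
instance : TopologicalSpace W := Preorder.topology W
instance : OrderTopology W := ⟨rfl⟩

def w0 : W := ⟨0, omega1_pos⟩
def Wsucc (a : W) : W := ⟨Order.succ a.1, omega1_isLimit.succ_lt a.2⟩

/-- The closed long ray: ω₁ × [0,1) with the lexicographic order topology. -/
def LongRay : Type 1 := W ×ₗ ↥(Set.Ico (0:ℝ) 1)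

instance : LinearOrder LongRay := by unfold LongRay; infer_instance
instance : TopologicalSpace LongRay := Preorder.topology LongRay
instance : OrderTopology LongRay := ⟨rfl⟩

/-- Embedding of ω₁ into the long ray as the points (α, 0). -/
def iW (a : W) : LongRay := toLex (a, ⟨0, le_rfl, one_pos⟩)
def lrZero : LongRay := iW w0

/-- A subset of ω₁ is unbounded. -/
def WUnbounded (S : Set W) : Prop := ∀ a : W, ∃ b ∈ S, a < b
/-- A subset of ω₁ is closed (in the order sense). -/
def WClosed (S : Set W) : Prop :=
  ∀ a : W, (∃ b, b < a) → (∀ b, b < a → ∃ c ∈ S, b < c ∧ c < a) → a ∈ S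
def WClub (S : Set W) : Prop := WClosed S ∧ WUnbounded S
def WStationary (A : Set W) : Prop := ∀ C : Set W, WClub C → (A ∩ C).Nonempty

/-- A Type I space structure on `X`. -/
structure TypeI (X : Type u) [TopologicalSpace X] where
  seq : W → Set X
  isOpen : ∀ a, IsOpen (seq a)
  lindelof : ∀ a, IsLindelof (closure (seq a))
  mono : ∀ a b : W, a < b → closure (seq a) ⊆ seq b
  covers : ∀ x : X, ∃ a, x ∈ seq a

variable {X : Type u} [TopologicalSpace X]

/-- A subset is bounded if contained in some `X_α`. -/
def TypeI.Bdd (hT : TypeI X) (A : Set X) : Prop := ∃ a, A ⊆ hT.seq a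
/-- Club: closed and unbounded. -/
def TypeI.Club (hT : TypeI X) (A : Set X) : Prop := IsClosed A ∧ ¬ hT.Bdd A
/-- A predirection: an unbounded set such that any function unbounded on it is
unbounded on every unbounded subset of it. -/
def TypeI.Predirection (hT : TypeI X) (D : Set X) : Prop :=
  ¬ hT.Bdd D ∧ ∀ f : X → LongRay, Continuous f → ¬ BddAbove (f '' D) →
    ∀ A ⊆ D, ¬ hT.Bdd A → ¬ BddAbove (f '' A)
/-- A direction: a closed predirection. -/
def TypeI.IsDirection (hT : TypeI X) (D : Set X) : Prop := IsClosed D ∧ hT.Predirection D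
/-- The bones. -/
def TypeI.bone (hT : TypeI X) (a : W) : Set X := closure (hT.seq a) \ hT.seq a
/-- The sequence is canonical. -/
def TypeI.Canonical (hT : TypeI X) : Prop :=
  ∀ a : W, Order.IsSuccLimit a.1 → hT.seq a = ⋃ b ∈ {b : W | b < a}, hT.seq b
/-- A slicer. -/
def TypeI.Slicer (hT : TypeI X) (s : X → LongRay) : Prop :=
  Continuous s ∧ ∀ a : W, ∀ x ∈ closure (hT.seq (Wsucc a)) \ hT.seq a,
    s x ∈ Set.Icc (iW a) (iW (Wsucc a))

/-- ω-bounded: closures of countable sets are compact. -/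
def OmegaBounded (X : Type u) [TopologicalSpace X] : Prop :=
  ∀ S : Set X, S.Countable → IsCompact (closure S)
/-- ω₁-compact: no uncountable closed discrete subset. -/
def Omega1Compact (X : Type u) [TopologicalSpace X] : Prop :=
  ∀ C : Set X, IsClosed C → DiscreteTopology C → C.Countable
/-- Countably tight. -/
def CountablyTight (X : Type u) [TopologicalSpace X] : Prop :=
  ∀ (A : Set X) (x : X), x ∈ closure A → ∃ B ⊆ A, B.Countable ∧ x ∈ closure B


/-! ### Auxiliary material for the proof -/

section Aux

/-- Unboundedness of a subset of `X` with respect to `π`. -/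
def Unb {X : Type u} (π : X → W) (A : Set X) : Prop := ∀ a : W, ∃ x ∈ A, a ≤ π x

/-- Club subsets of `X`: closed and `π`-unbounded. -/
def Clb {X : Type u} [TopologicalSpace X] (π : X → W) (A : Set X) : Prop :=
  IsClosed A ∧ Unb π A

theorem wlt_iff {a b : W} : a < b ↔ a.1 < b.1 := Iff.rfl

theorem countable_nat_lt_cof_omega1 : (Cardinal.mk ℕ) < omega1.cof := by
  rw [show omega1.cof = Cardinal.aleph 1 from Cardinal.isRegular_aleph_one.cof_eq,
    Cardinal.mk_nat]
  exact Cardinal.aleph0_lt_aleph_one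

/-- Supremum of a countable sequence in `W`. -/
def wSup (f : ℕ → W) : W :=
  ⟨⨆ n, (f n).1, Ordinal.iSup_lt_ord countable_nat_lt_cof_omega1 (fun n => (f n).2)⟩

theorem le_wSup (f : ℕ → W) (n : ℕ) : f n ≤ wSup f :=
  Ordinal.le_iSup (fun n => (f n).1) n

theorem wSup_le {f : ℕ → W} {y : W} (h : ∀ n, f n ≤ y) : wSup f ≤ y :=
  Ordinal.iSup_le h

theorem lt_wsucc (a : W) : a < Wsucc a := Order.lt_succ a.1

theorem countable_Iio (a : W) : (Set.Iio a).Countable := by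
  rw [Cardinal.countable_iff_lt_aleph_one]
  have e : ↥(Set.Iio a) ≃ ↥(Set.Iio a.1) :=
    { toFun := fun b => ⟨b.1.1, b.2⟩
      invFun := fun o => ⟨⟨o.1, lt_trans o.2 a.2⟩, o.2⟩
      left_inv := fun b => rfl
      right_inv := fun o => rfl }
  rw [Cardinal.mk_congr e, Ordinal.mk_Iio_ordinal]
  have h1 : a.1.card < Cardinal.aleph 1 := Cardinal.lt_ord.1 a.2
  have h2 : Cardinal.lift.{1} (Cardinal.aleph 1 : Cardinal.{0}) = (Cardinal.aleph 1 : Cardinal.{1}) := by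
    rw [Cardinal.lift_aleph, Ordinal.lift_one]
  calc Cardinal.lift.{1} a.1.card < Cardinal.lift.{1} (Cardinal.aleph 1) := Cardinal.lift_lt.2 h1
    _ = _ := h2

theorem bddAbove_of_countable {S : Set LongRay} (h : S.Countable) : BddAbove S := by
  rcases S.eq_empty_or_nonempty with rfl | hne
  · exact ⟨lrZero, fun y hy => absurd hy (Set.notMem_empty y)⟩
  obtain ⟨f, hf⟩ := h.exists_eq_range hne
  refine ⟨iW (Wsucc (wSup fun n => (ofLex (f n)).1)), ?_⟩
  rintro y hy
  rw [hf] at hy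
  obtain ⟨n, rfl⟩ := hy
  have : (ofLex (f n)).1 < Wsucc (wSup fun n => (ofLex (f n)).1) :=
    lt_of_le_of_lt (le_wSup _ n) (lt_wsucc _)
  exact le_of_lt (by
    show f n < iW _
    rw [show f n = toLex (ofLex (f n)) from rfl]
    rw [iW]
    exact Prod.Lex.toLex_lt_toLex.2 (Or.inl this))

variable {X : Type u} [TopologicalSpace X]

theorem mem_closure_low (π : X → W) (hc : Continuous π) {T : Set X} {x : X} {a : W}
    (hx : x ∈ closure T) (hxa : π x < a) : x ∈ closure (T ∩ π ⁻¹' (Set.Iio a)) := by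
  have hsplit : T ⊆ (T ∩ π ⁻¹' (Set.Iio a)) ∪ (T ∩ π ⁻¹' (Set.Ici a)) := by
    intro y hy
    rcases lt_or_ge (π y) a with h | h
    · exact Or.inl ⟨hy, h⟩
    · exact Or.inr ⟨hy, h⟩
  have hx2 := closure_mono hsplit hx
  rw [closure_union] at hx2
  rcases hx2 with h | h
  · exact h
  · exfalso
    have hcl : IsClosed (π ⁻¹' (Set.Ici a)) := isClosed_Ici.preimage hc
    have : x ∈ π ⁻¹' (Set.Ici a) :=
      closure_minimal (Set.inter_subset_right) hcl h
    exact absurd hxa (not_lt.2 this)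

theorem clb_iInter [T2Space X] (π : X → W) (hcl : IsClosedMap π) {D : ℕ → Set X}
    (hD : ∀ n, Clb π (D n)) (hmono : ∀ n, D (n + 1) ⊆ D n) : Clb π (⋂ n, D n) := by
  refine ⟨isClosed_iInter (fun n => (hD n).1), ?_⟩
  intro a
  have hanti : ∀ m n : ℕ, m ≤ n → D n ⊆ D m := by
    intro m n h
    induction h with
    | refl => exact le_refl _
    | step h ih => exact (hmono _).trans ih
  choose g hg1 hg2 using fun (n : ℕ) (y : X) => (hD (n + 1)).2 (Wsucc (π y))
  obtain ⟨x0, hx01, hx02⟩ := (hD 0).2 a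
  set x : ℕ → X := fun n => Nat.rec x0 g n with hxdef
  have hx : ∀ n, x n ∈ D n := by
    intro n
    cases n with
    | zero => exact hx01
    | succ n => exact hg1 n (x n)
  have hxs : ∀ n, π (x n) < π (x (n + 1)) := fun n =>
    lt_of_lt_of_le (lt_wsucc _) (hg2 n (x n))
  have hmonoπ : ∀ m n : ℕ, m ≤ n → π (x m) ≤ π (x n) := by
    intro m n h
    induction h with
    | refl => exact le_refl _
    | step h ih => exact ih.trans (le_of_lt (hxs _))
  set lam := wSup (fun n => π (x n)) with hlam
  have hlt : ∀ n, π (x n) < lam := fun n =>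
    lt_of_lt_of_le (hxs n) (le_wSup (fun n => π (x n)) (n + 1))
  set T : ℕ → Set X := fun n => x '' {k | n ≤ k} with hT
  have hTD : ∀ n, T n ⊆ D n := by
    rintro n _ ⟨k, hk, rfl⟩
    exact hanti n k hk (hx k)
  have hlub : IsLUB (π '' T 0) lam := by
    constructor
    · rintro _ ⟨_, ⟨k, _, rfl⟩, rfl⟩
      exact le_of_lt (hlt k)
    · intro y hy
      refine wSup_le (fun n => hy ⟨x n, ⟨n, by exact Nat.zero_le n, rfl⟩, rfl⟩)
  have hmemcl : lam ∈ closure (π '' T 0) :=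
    hlub.mem_closure ⟨π (x 0), ⟨x 0, ⟨0, by exact Nat.zero_le 0, rfl⟩, rfl⟩⟩
  have hmem2 : lam ∈ π '' closure (T 0) := hcl.closure_image_subset _ hmemcl
  obtain ⟨z, hz, hπz⟩ := hmem2
  have hzn : ∀ n, z ∈ closure (T n) := by
    intro n
    have hT0 : T 0 = (x '' {k | k < n}) ∪ T n := by
      apply Set.eq_of_subset_of_subset
      · rintro _ ⟨k, _, rfl⟩
        rcases lt_or_ge k n with h | h
        · exact Or.inl ⟨k, h, rfl⟩
        · exact Or.inr ⟨k, h, rfl⟩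
      · rintro _ (⟨k, _, rfl⟩ | ⟨k, _, rfl⟩) <;> exact ⟨k, by exact Nat.zero_le k, rfl⟩
    have hz2 := hz
    rw [hT0, closure_union] at hz2
    rcases hz2 with h | h
    · exfalso
      have hfin : (x '' {k | k < n}).Finite := (Set.finite_Iio n).image x
      rw [hfin.isClosed.closure_eq] at h
      obtain ⟨k, _, hzk⟩ := h
      have := hlt k
      rw [← hzk] at hπz
      rw [hπz] at this
      exact lt_irrefl _ this
    · exact h
  refine ⟨z, Set.mem_iInter.2 (fun n => closure_minimal (hTD n) (hD n).1 (hzn n)), ?_⟩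
  rw [hπz]
  exact hx02.trans (le_of_lt (hlt 0))

theorem image_wclub (π : X → W) (hcl : IsClosedMap π) {D : Set X} (hD : Clb π D) :
    WClub (π '' D) := by
  have hclosed : IsClosed (π '' D) := hcl D hD.1
  constructor
  · intro a h1 h2
    set Q := (π '' D) ∩ Set.Iio a with hQ
    have hne : Q.Nonempty := by
      obtain ⟨b, hb⟩ := h1
      obtain ⟨c, hc, _, hca⟩ := h2 b hb
      exact ⟨c, hc, hca⟩
    have hlub : IsLUB Q a := by
      constructor
      · rintro q ⟨_, hq2⟩
        exact le_of_lt hq2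
      · intro y hy
        by_contra hya
        obtain ⟨c, hc, hyc, hca⟩ := h2 y (not_le.1 hya)
        exact absurd (hy ⟨hc, hca⟩) (not_le.2 hyc)
    have := hlub.mem_closure hne
    have h3 : a ∈ closure (π '' D) := closure_mono Set.inter_subset_left this
    rwa [hclosed.closure_eq] at h3
  · intro b
    obtain ⟨x, hx, hbx⟩ := hD.2 (Wsucc b)
    exact ⟨π x, Set.mem_image_of_mem π hx, lt_of_lt_of_le (lt_wsucc b) hbx⟩

theorem direction_of_atomic [T2Space X] (π : X → W) (hc : Continuous π)
    (hs : Function.Surjective π) {D : Set X} (hD : Clb π D)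
    (hat : ∀ E F : Set X, Clb π E → E ⊆ D → Clb π F → F ⊆ D → Disjoint E F → False) :
    ∃ Dir : Set X, IsClosed Dir ∧ Unb π Dir ∧
      ∀ f : X → LongRay, Continuous f → ¬ BddAbove (f '' Dir) →
        ∀ A ⊆ Dir, Unb π A → ¬ BddAbove (f '' A) := by
  have hpick : ∀ c : W, ∃ x : X, π x = c ∧ (c ∈ π '' D → x ∈ D) := by
    intro c
    by_cases hcd : c ∈ π '' D
    · obtain ⟨x, hx, rfl⟩ := hcd
      exact ⟨x, rfl, fun _ => hx⟩
    · obtain ⟨x, hx⟩ := hs c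
      exact ⟨x, hx, fun h => absurd h hcd⟩
  choose t ht1 ht2 using hpick
  set T := t '' (π '' D) with hTdef
  set E := closure T with hEdef
  have hTD : T ⊆ D := by
    rintro _ ⟨c, hcD, rfl⟩
    exact ht2 c hcD
  have hED : E ⊆ D := closure_minimal hTD hD.1
  have hUnbT : Unb π T := by
    intro a
    obtain ⟨x, hx, hax⟩ := hD.2 a
    refine ⟨t (π x), ⟨π x, Set.mem_image_of_mem π hx, rfl⟩, ?_⟩
    rw [ht1]
    exact hax
  have hUnbE : Unb π E := fun a =>
    (hUnbT a).imp (fun y hy => ⟨subset_closure hy.1, hy.2⟩)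
  refine ⟨E, isClosed_closure, hUnbE, ?_⟩
  intro f hf hUnbf A hAE hUnbA hbdd
  obtain ⟨b, hb⟩ := hbdd
  set b2 := iW (Wsucc (ofLex b).1) with hb2def
  have hbb2 : b < b2 := by
    rw [show b = toLex (ofLex b) from rfl, hb2def, iW]
    exact Prod.Lex.toLex_lt_toLex.2 (Or.inl (lt_wsucc _))
  set G := E ∩ f ⁻¹' (Set.Ici b2) with hGdef
  have hGclosed : IsClosed G := isClosed_closure.inter (isClosed_Ici.preimage hf)
  have hclAle : f '' closure A ⊆ Set.Iic b := by
    refine (image_closure_subset_closure_image hf).trans ?_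
    have h1 : f '' A ⊆ Set.Iic b := fun y hy => hb hy
    calc closure (f '' A) ⊆ closure (Set.Iic b) := closure_mono h1
      _ = Set.Iic b := isClosed_Iic.closure_eq
  have hdisj : Disjoint (closure A) G := by
    rw [Set.disjoint_left]
    intro x hxA hxG
    have h1 : f x ≤ b := hclAle (Set.mem_image_of_mem f hxA)
    exact absurd hbb2 (not_lt.2 (hxG.2.trans h1))
  have hGunb : Unb π G := by
    by_contra hn
    simp only [Unb] at hn
    push_neg at hn
    obtain ⟨a, ha⟩ := hn
    set T' := T ∩ π ⁻¹' (Set.Iio a) with hT'def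
    have hT'sub : T' ⊆ t '' (Set.Iio a) := by
      rintro _ ⟨⟨c, hcD, rfl⟩, hlt⟩
      refine ⟨c, ?_, rfl⟩
      have : π (t c) = c := ht1 c
      rw [Set.mem_preimage, this] at hlt
      exact hlt
    have hT'c : T'.Countable := ((countable_Iio a).image t).mono hT'sub
    obtain ⟨b1, hb1⟩ := bddAbove_of_countable (hT'c.image f)
    apply hUnbf
    refine ⟨max b1 b2, ?_⟩
    rintro _ ⟨x, hxE, rfl⟩
    rcases lt_or_ge (π x) a with hlow | hhigh
    · have hx' : x ∈ closure T' := mem_closure_low π hc hxE hlow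
      have h2 : f x ∈ closure (f '' T') :=
        image_closure_subset_closure_image hf (Set.mem_image_of_mem f hx')
      have h3 : closure (f '' T') ⊆ Set.Iic b1 := by
        calc closure (f '' T') ⊆ closure (Set.Iic b1) := closure_mono (fun y hy => hb1 hy)
          _ = Set.Iic b1 := isClosed_Iic.closure_eq
      exact le_trans (h3 h2) (le_max_left _ _)
    · have hxG : x ∉ G := fun hxG => absurd (ha x hxG) (not_lt.2 hhigh)
      have h4 : ¬ b2 ≤ f x := fun h => hxG ⟨hxE, h⟩
      exact le_trans (le_of_lt (not_le.1 h4)) (le_max_right _ _)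
  have hclAclb : Clb π (closure A) :=
    ⟨isClosed_closure, fun a => (hUnbA a).imp (fun y hy => ⟨subset_closure hy.1, hy.2⟩)⟩
  have hclAD : closure A ⊆ D := (closure_minimal hAE isClosed_closure).trans hED
  exact hat (closure A) G hclAclb hclAD ⟨hGclosed, hGunb⟩
    ((Set.inter_subset_left).trans hED) hdisj

/-- Tree of sets indexed by lists of booleans (root at `[]`, children by prepending). -/
def nodeSet {X : Type u} (sp : Set X → Set X × Set X) : List Bool → Set X
  | [] => Set.univ
  | true :: l => (sp (nodeSet sp l)).1
  | false :: l => (sp (nodeSet sp l)).2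

/-- Initial segment of a branch, as a list (most recent choice first). -/
def segList (r : ℕ → Bool) : ℕ → List Bool
  | 0 => []
  | n + 1 => r n :: segList r n

theorem segList_congr {r s : ℕ → Bool} :
    ∀ n, (∀ k, k < n → r k = s k) → segList r n = segList s n
  | 0, _ => rfl
  | n + 1, h => by
    rw [segList, segList, h n (Nat.lt_succ_self n),
      segList_congr n (fun k hk => h k (hk.trans (Nat.lt_succ_self n)))]

theorem no_atomic_absurd [T2Space X] (π : X → W) (hcl : IsClosedMap π)
    (hs : Function.Surjective π)
    (hcof : Cardinal.aleph 1 < ((2 : Cardinal.{u}) ^ Cardinal.aleph0).ord.cof)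
    {Ssmall : Set W}
    (hsmall : ∀ a ∈ Ssmall, Cardinal.mk ↥(π ⁻¹' {a}) < (2 : Cardinal.{u}) ^ Cardinal.aleph0)
    (hstat : WStationary Ssmall)
    (hnoatomic : ∀ D : Set X, Clb π D →
      ∃ E F : Set X, Clb π E ∧ E ⊆ D ∧ Clb π F ∧ F ⊆ D ∧ Disjoint E F) : False := by
  classical
  set c0 : Cardinal.{0} := 2 ^ Cardinal.aleph0 with hc0
  -- transfer the cofinality hypothesis to `Cardinal.{0}`
  have hliftc0 : Cardinal.lift.{u} c0 = (2 : Cardinal.{u}) ^ Cardinal.aleph0 := by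
    rw [hc0, Cardinal.lift_two_power, Cardinal.lift_aleph0]
  have hcof0 : Cardinal.aleph 1 < c0.ord.cof := by
    have h1 := hcof
    rw [← hliftc0, ← Cardinal.lift_ord, ← Ordinal.lift_cof] at h1
    have h2 : Cardinal.lift.{u} (Cardinal.aleph 1 : Cardinal.{0}) =
        (Cardinal.aleph 1 : Cardinal.{u}) := by
      rw [Cardinal.lift_aleph, Ordinal.lift_one]
    rw [← h2] at h1
    exact Cardinal.lift_lt.1 h1
  -- the splitting function
  set sp : Set X → Set X × Set X := fun C =>
    if h : Clb π C then ⟨(hnoatomic C h).choose, (hnoatomic C h).choose_spec.choose⟩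
    else (C, C) with hspdef
  have hsp : ∀ C, Clb π C → Clb π (sp C).1 ∧ (sp C).1 ⊆ C ∧ Clb π (sp C).2 ∧ (sp C).2 ⊆ C ∧
      Disjoint (sp C).1 (sp C).2 := by
    intro C hC
    rw [hspdef]
    simp only [dif_pos hC]
    exact (hnoatomic C hC).choose_spec.choose_spec
  have hclbuniv : Clb π (Set.univ : Set X) :=
    ⟨isClosed_univ, fun a => ⟨(hs a).choose, Set.mem_univ _, le_of_eq (hs a).choose_spec.symm⟩⟩
  have hnode : ∀ l : List Bool, Clb π (nodeSet sp l) := by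
    intro l
    induction l with
    | nil => exact hclbuniv
    | cons b l ih =>
      cases b
      · exact (hsp _ ih).2.2.1
      · exact (hsp _ ih).1
  have hsub : ∀ (b : Bool) (l : List Bool), nodeSet sp (b :: l) ⊆ nodeSet sp l := by
    intro b l
    cases b
    · exact (hsp _ (hnode l)).2.2.2.1
    · exact (hsp _ (hnode l)).2.1
  have hdisjchild : ∀ l : List Bool,
      Disjoint (nodeSet sp (true :: l)) (nodeSet sp (false :: l)) := by
    intro l
    exact (hsp _ (hnode l)).2.2.2.2
  -- branches
  set K : (ℕ → Bool) → Set X := fun r => ⋂ n, nodeSet sp (segList r n) with hKdef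
  have hKclb : ∀ r, Clb π (K r) := by
    intro r
    exact clb_iInter π hcl (fun n => hnode (segList r n)) (fun n => hsub (r n) (segList r n))
  have hKsub : ∀ r n, K r ⊆ nodeSet sp (segList r n) := fun r n => Set.iInter_subset _ n
  have hKdisj : ∀ r s : ℕ → Bool, r ≠ s → Disjoint (K r) (K s) := by
    intro r s hrs
    have hex : ∃ n, r n ≠ s n := by
      by_contra h
      push_neg at h
      exact hrs (funext h)
    set n := Nat.find hex with hn
    have hseg : segList r n = segList s n :=
      segList_congr n (fun k hk => by
        by_contra hne
        exact Nat.find_min hex hk hne)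
    have hne := Nat.find_spec hex
    refine Disjoint.mono (hKsub r (n + 1)) (hKsub s (n + 1)) ?_
    show Disjoint (nodeSet sp (r n :: segList r n)) (nodeSet sp (s n :: segList s n))
    cases hr : r n <;> cases hsn : s n
    · exact absurd (hr.trans hsn.symm) hne
    · rw [hseg]
      exact (hdisjchild (segList s n)).symm
    · rw [hseg]
      exact hdisjchild (segList s n)
    · exact absurd (hr.trans hsn.symm) hne
  -- pick points in small fibers
  have hpick : ∀ r : ℕ → Bool, ∃ x : X, x ∈ K r ∧ π x ∈ Ssmall := by
    intro r
    obtain ⟨α, hα⟩ := hstat (π '' K r) (image_wclub π hcl (hKclb r))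
    obtain ⟨x, hx, hπx⟩ := hα.2
    exact ⟨x, hx, by rw [hπx]; exact hα.1⟩
  choose Φ hΦK hΦS using hpick
  have hΦinj : Function.Injective Φ := by
    intro r s h
    by_contra hrs
    exact Set.disjoint_left.1 (hKdisj r s hrs) (hΦK r) (h ▸ hΦK s)
  -- counting
  set g : (ℕ → Bool) → W := fun r => π (Φ r) with hgdef
  set R : W → Set (ℕ → Bool) := fun α => g ⁻¹' {α} with hRdef
  have hRsmall : ∀ α : W, Cardinal.mk ↥(R α) < c0 := by
    intro α
    by_cases hα : α ∈ Ssmall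
    · have emb : ↥(R α) ↪ ↥(π ⁻¹' ({α} : Set W)) :=
        ⟨fun r => ⟨Φ r.1, r.2⟩, by
          intro a b hab
          have := congrArg Subtype.val hab
          exact Subtype.ext (hΦinj this)⟩
      have h1 : Cardinal.lift.{u} (Cardinal.mk ↥(R α)) ≤
          Cardinal.lift.{0} (Cardinal.mk ↥(π ⁻¹' ({α} : Set W))) :=
        Cardinal.lift_mk_le'.mpr ⟨emb⟩
      rw [Cardinal.lift_uzero] at h1
      have h2 : Cardinal.lift.{u} (Cardinal.mk ↥(R α)) < Cardinal.lift.{u} c0 := by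
        rw [hliftc0]
        exact h1.trans_lt (hsmall α hα)
      exact Cardinal.lift_lt.1 h2
    · have hempty : R α = ∅ := by
        apply Set.eq_empty_iff_forall_notMem.2
        intro r hr
        have : g r = α := hr
        rw [← this] at hα
        exact hα (hΦS r)
      rw [hempty, Cardinal.mk_emptyCollection]
      exact lt_of_lt_of_le Cardinal.aleph0_pos (Cardinal.cantor Cardinal.aleph0).le
  -- flatten the index
  set e : omega1.ToType ≃ W :=
    ((Ordinal.ToType.mk (o := omega1)).toEquiv.symm.trans
      (Equiv.subtypeEquivRight (fun a => Iff.rfl))) with hedef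
  have hcover : (Set.univ : Set (ℕ → Bool)) = ⋃ i, R (e i) := by
    apply Set.eq_of_subset_of_subset
    · intro r _
      refine Set.mem_iUnion.2 ⟨e.symm (g r), ?_⟩
      show g r = e (e.symm (g r))
      exact (e.apply_symm_apply (g r)).symm
    · intro r _
      exact Set.mem_univ r
  have hmktot : Cardinal.mk (ℕ → Bool) = c0 := by
    rw [hc0, ← Cardinal.power_def, Cardinal.mk_bool, Cardinal.mk_nat]
  have h1 : c0 ≤ Cardinal.mk ↥(⋃ i, R (e i)) := by
    rw [← hcover, Cardinal.mk_univ, hmktot]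
  have h2 : Cardinal.mk ↥(⋃ i, R (e i)) ≤ Cardinal.sum (fun i => Cardinal.mk ↥(R (e i))) :=
    Cardinal.mk_iUnion_le_sum_mk
  have h3 : Cardinal.sum (fun i => Cardinal.mk ↥(R (e i))) ≤
      Cardinal.mk omega1.ToType * ⨆ i, Cardinal.mk ↥(R (e i)) :=
    Cardinal.sum_le_mk_mul_iSup _
  have hmk : Cardinal.mk omega1.ToType = Cardinal.aleph 1 := by
    rw [Cardinal.mk_toType, omega1, Cardinal.card_ord]
  have hsup : (⨆ i, Cardinal.mk ↥(R (e i))) < c0 := by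
    apply Ordinal.iSup_lt
    · rw [hmk]; exact hcof0
    · exact fun i => hRsmall _
  have haleph1lt : Cardinal.mk omega1.ToType < c0 := by
    rw [hmk]
    exact lt_of_lt_of_le hcof0 (Ordinal.cof_ord_le c0)
  have hmul : Cardinal.mk omega1.ToType * (⨆ i, Cardinal.mk ↥(R (e i))) < c0 :=
    Cardinal.mul_lt_of_lt (Cardinal.cantor Cardinal.aleph0).le haleph1lt hsup
  exact absurd (h1.trans (h2.trans h3)) (not_le.2 hmul)

end Aux

/-- If cf(2^ω) > ω₁ and stationarily many fibers of a closed preimage of ω₁ have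
size < 2^ω (in particular, are finite), then the space contains a direction. -/
theorem stmt_10 {X : Type u} [TopologicalSpace X] [T2Space X]
    (hcof : Cardinal.aleph 1 < ((2 : Cardinal.{u}) ^ Cardinal.aleph0).ord.cof)
    (π : X → W) (hc : Continuous π) (hcl : IsClosedMap π) (hs : Function.Surjective π) :
    ((WStationary {a : W | Cardinal.mk ↥(π ⁻¹' {a}) < (2 : Cardinal.{u}) ^ Cardinal.aleph0}) →
      ∃ D : Set X, IsClosed D ∧ (¬ ∃ a : W, ∀ x ∈ D, π x < a) ∧
        ∀ f : X → LongRay, Continuous f → ¬ BddAbove (f '' D) →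
          ∀ A ⊆ D, (¬ ∃ a : W, ∀ x ∈ A, π x < a) → ¬ BddAbove (f '' A)) ∧
    ((WStationary {a : W | (π ⁻¹' {a}).Finite}) →
      ∃ D : Set X, IsClosed D ∧ (¬ ∃ a : W, ∀ x ∈ D, π x < a) ∧
        ∀ f : X → LongRay, Continuous f → ¬ BddAbove (f '' D) →
          ∀ A ⊆ D, (¬ ∃ a : W, ∀ x ∈ A, π x < a) → ¬ BddAbove (f '' A)) := by
  classical
  have main : (WStationary {a : W | Cardinal.mk ↥(π ⁻¹' {a}) < (2 : Cardinal.{u}) ^ Cardinal.aleph0}) →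
      ∃ D : Set X, IsClosed D ∧ (¬ ∃ a : W, ∀ x ∈ D, π x < a) ∧
        ∀ f : X → LongRay, Continuous f → ¬ BddAbove (f '' D) →
          ∀ A ⊆ D, (¬ ∃ a : W, ∀ x ∈ A, π x < a) → ¬ BddAbove (f '' A) := by
    intro hstat
    by_cases hat : ∃ D : Set X, Clb π D ∧
        ∀ E F : Set X, Clb π E → E ⊆ D → Clb π F → F ⊆ D → Disjoint E F → False
    · obtain ⟨D, hD, hDat⟩ := hat
      obtain ⟨Dir, h1, h2, h3⟩ := direction_of_atomic π hc hs hD hDat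
      refine ⟨Dir, h1, ?_, ?_⟩
      · rintro ⟨a, ha⟩
        obtain ⟨x, hx, hax⟩ := h2 a
        exact absurd (ha x hx) (not_lt.2 hax)
      · intro f hf hUnb A hA hA2
        apply h3 f hf hUnb A hA
        intro a
        by_contra hno
        push_neg at hno
        exact hA2 ⟨a, hno⟩
    · have hnoatomic : ∀ D : Set X, Clb π D →
          ∃ E F : Set X, Clb π E ∧ E ⊆ D ∧ Clb π F ∧ F ⊆ D ∧ Disjoint E F := by
        intro D hD
        by_contra hno
        exact hat ⟨D, hD, fun E F h1 h2 h3 h4 h5 => hno ⟨E, F, h1, h2, h3, h4, h5⟩⟩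
      exact absurd (no_atomic_absurd π hcl hs hcof (fun a ha => ha) hstat hnoatomic) id
  refine ⟨main, ?_⟩
  intro hstat
  apply main
  intro C hC
  obtain ⟨a, ha1, ha2⟩ := hstat C hC
  refine ⟨a, ?_, ha2⟩
  show Cardinal.mk ↥(π ⁻¹' {a}) < (2 : Cardinal.{u}) ^ Cardinal.aleph0
  have : Finite ↥(π ⁻¹' ({a} : Set W)) := ha1.to_subtype
  exact lt_of_lt_of_le (Cardinal.lt_aleph0_of_finite _) (Cardinal.cantor Cardinal.aleph0).le

end
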